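/- arXiv:2303.18249 — 4 statements merged into one kernel-verified Lean document; each statement's English description precedes it below -/
import Mathlib

section
/- Let H be an abelian category which is a length category and let S be a simple object of H. Then the full subcategory ⟨S⟩ is functorially finite in H, i.e. every object of H admits both a left ⟨S⟩-approximation and a right ⟨S⟩-approximation. -/
/-!
STATEMENT 1: Let H be an abelian category which is a length category and let S be a simple
object of H. Then the full subcategory ⟨S⟩ is functorially finite in H, i.e. every object of H
admits both a left ⟨S⟩-approximation and a right ⟨S⟩-approximation.
-/

open CategoryTheory CategoryTheory.Limits

universe v u

variable {C : Type u} [Category.{v} C] [Abelian C]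

/-- `⟨S⟩`: the smallest full subcategory of the abelian category `C` containing the zero
objects and `S`, and closed under extensions; equivalently, the objects admitting a finite
filtration with all subquotients isomorphic to `S`. -/
inductive SClosure (S : C) : C → Prop
  | of_isZero (X : C) : IsZero X → SClosure S X
  | of_iso (X : C) : Nonempty (X ≅ S) → SClosure S X
  | of_extension {X Y Z : C} (f : X ⟶ Y) (g : Y ⟶ Z) (w : f ≫ g = 0)
      (hse : (ShortComplex.mk f g w).ShortExact) :
      SClosure S X → SClosure S Z → SClosure S Y

/-- An object has finite length: it admits a finite filtration with simple subquotients. -/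
inductive FinLength : C → Prop
  | of_isZero (X : C) : IsZero X → FinLength X
  | of_extension {X Y Z : C} (f : X ⟶ Y) (g : Y ⟶ Z) (w : f ≫ g = 0)
      (hse : (ShortComplex.mk f g w).ShortExact) :
      FinLength X → Simple Z → FinLength Y

/-!
For simple `S`, `⟨S⟩` is a Serre class: it is closed under quotients by induction on the
filtration (a nonzero quotient of `S` is `S`), and under subobjects by the dual argument in `Cᵒᵖ`.

For a Serre class `P`, every finite-length object `M` has a largest `P`-subobject, whose inclusion
is a right `P`-approximation. Induct along `0 → X → M → Z → 0` with `Z` simple, given the largest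
`P`-subobject `T` of `X`. If no `P`-object maps nontrivially to `Z`, every `P`-object mapping to
`M` lands in `X`, hence in `T`. Otherwise some `P`-subobject `W ⊇ T` covers `Z`; for any
`P`-subobject `W' ⊇ W`, the part of `W'` over `X` is a `P`-object, so lies in `T ⊆ W`, and hence
`W' = W`. Left approximations are right approximations in `Cᵒᵖ`, where `M` still has finite
length because finite-length objects are closed under extensions.
-/

open Opposite ZeroObject

instance {X : C} [Simple X] : Simple (op X) where
  mono_isIso_iff_nonzero f _ := by
    rw [← isIso_unop_iff, Ne, ← Quiver.Hom.unop_inj.eq_iff, unop_zero]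
    exact ⟨fun _ h => Simple.not_isZero X (IsZero.of_mono_eq_zero _ h), isIso_of_epi_of_nonzero⟩

lemma epi_of_epi_comp_of_kernel_ι_factors {V W Z : C} (ρ : V ⟶ W) (q : W ⟶ Z) [Epi (ρ ≫ q)]
    {τ : kernel q ⟶ V} (hτ : τ ≫ ρ = kernel.ι q) : Epi ρ := by
  have : Epi q := epi_of_epi ρ q
  have hexact := ShortComplex.exact_of_f_is_kernel (.mk _ q (kernel.condition q)) (kernelIsKernel q)
  obtain ⟨d, hd⟩ := hexact.desc' (cokernel.π ρ) (by simp [← hτ])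
  have hd0 : d = 0 := by
    rw [← cancel_epi (ρ ≫ q)]
    simp [hd]
  exact Abelian.epi_of_cokernel_π_eq_zero _ (by simp [← hd, hd0])

namespace CategoryTheory.ObjectProperty

section

variable {D : Type*} [Category D] (P : ObjectProperty D)

def IsRightApproximation {X M : D} (f : X ⟶ M) : Prop :=
  P X ∧ ∀ X' : D, P X' → ∀ h : X' ⟶ M, ∃ u : X' ⟶ X, u ≫ f = h

def IsLeftApproximation {M X : D} (g : M ⟶ X) : Prop :=
  P X ∧ ∀ X' : D, P X' → ∀ h : M ⟶ X', ∃ u : X ⟶ X', g ≫ u = h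

variable {P}

lemma IsRightApproximation.unop {X M : Dᵒᵖ} {f : X ⟶ M} (hf : P.op.IsRightApproximation f) :
    P.IsLeftApproximation f.unop := by
  refine ⟨hf.1, fun X' hX' h => ?_⟩
  obtain ⟨u, hu⟩ := hf.2 (op X') hX' h.op
  exact ⟨u.unop, by simpa using congrArg Quiver.Hom.unop hu⟩

end

instance (P : ObjectProperty C) [P.IsSerreClass] : P.op.IsSerreClass where
  prop_of_mono f _ h := P.prop_of_epi f.unop h
  prop_of_epi f _ h := P.prop_of_mono f.unop h
  prop_X₂_of_shortExact hS h₁ h₃ := P.prop_X₂_of_shortExact hS.unop h₃ h₁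

end CategoryTheory.ObjectProperty

namespace SClosure

variable {S : C}

lemma op {X : C} (h : SClosure S X) : SClosure (op S) (op X) := by
  induction h with
  | of_isZero X hX => exact of_isZero _ hX.op
  | of_iso X e => exact of_iso _ ⟨e.some.op.symm⟩
  | of_extension _ _ _ hse _ _ ih₁ ih₃ => exact of_extension _ _ _ hse.op ih₃ ih₁

lemma unop {S X : Cᵒᵖ} (h : SClosure S X) : SClosure S.unop X.unop := by
  induction h with
  | of_isZero X hX => exact of_isZero _ hX.unop
  | of_iso X e => exact of_iso _ ⟨e.some.unop.symm⟩
  | of_extension _ _ _ hse _ _ ih₁ ih₃ => exact of_extension _ _ _ hse.unop ih₃ ih₁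

lemma of_epi [Simple S] {X Q : C} (π : X ⟶ Q) [Epi π] (h : SClosure S X) : SClosure S Q := by
  induction h generalizing Q with
  | of_isZero X hX => exact of_isZero _ (IsZero.of_epi π hX)
  | of_iso X e =>
    have : Simple X := Simple.of_iso e.some
    by_cases hπ : π = 0
    · exact of_isZero _ (IsZero.of_epi_eq_zero π hπ)
    · have : IsIso π := isIso_of_epi_of_nonzero hπ
      exact of_iso _ ⟨(asIso π).symm ≪≫ e.some⟩
  | @of_extension X Y Z f g w hse _ _ ih₁ ih₃ =>
    -- `Q` is an extension of the cokernel of `I ⟶ Q`, a quotient of `Z`, by the image `I` of `X`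
    let ι := image.ι (f ≫ π)
    have hI : SClosure S (image (f ≫ π)) := ih₁ (factorThruImage (f ≫ π))
    have : Epi (π ≫ cokernel.π ι) := epi_comp _ _
    have := hse.epi_g
    obtain ⟨r, hr⟩ := hse.exact.desc' (π ≫ cokernel.π ι) (by
      calc f ≫ π ≫ cokernel.π ι = (factorThruImage (f ≫ π) ≫ ι) ≫ cokernel.π ι := by simp [ι]
        _ = 0 := by simp)
    have : Epi r := epi_of_epi_fac hr
    refine of_extension ι (cokernel.π ι) (cokernel.condition ι) ?_ hI (ih₃ r)
    exact { exact := ShortComplex.exact_of_g_is_cokernel _ (cokernelIsCokernel ι) }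

end SClosure

instance (S : C) : ObjectProperty.IsClosedUnderExtensions (SClosure S) where
  prop_X₂_of_shortExact hS h₁ h₃ := SClosure.of_extension _ _ _ hS h₁ h₃

instance (S : C) [Simple S] : ObjectProperty.IsSerreClass (SClosure S) where
  exists_zero := ⟨_, isZero_zero C, .of_isZero _ (isZero_zero C)⟩
  prop_of_epi f _ h := h.of_epi f
  prop_of_mono f _ h := (h.op.of_epi f.op).unop

lemma shortExact_kernelCompSequence_of_epi {X Y Z : C} (f : X ⟶ Y) (g : Y ⟶ Z) [Epi f] :
    (kernelCokernelCompSequence.snakeInput f g).L₀.ShortExact where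
  mono_f :=
    have : Mono (kernelCokernelCompSequence.snakeInput f g).L₁.f :=
      inferInstanceAs (Mono (biprod.inl : X ⟶ X ⊞ Y))
    (kernelCokernelCompSequence.snakeInput f g).mono_L₀_f
  exact := (kernelCokernelCompSequence.snakeInput f g).L₀_exact
  epi_g := (kernelCokernelCompSequence.snakeInput f g).L₁'_exact.epi_f
    ((isZero_cokernel_of_epi f).eq_of_tgt _ _)

namespace FinLength

lemma of_iso {X Y : C} (h : FinLength X) (e : X ≅ Y) : FinLength Y := by
  induction h generalizing Y with
  | of_isZero X hX => exact of_isZero _ (hX.of_iso e.symm)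
  | of_extension f g w hse hX hZ _ =>
    have hse' : (ShortComplex.mk (f ≫ e.hom) (e.inv ≫ g) (by simp [w])).ShortExact :=
      ShortComplex.shortExact_of_iso
        (ShortComplex.isoMk (S₁ := .mk f g w) (Iso.refl _) e (Iso.refl _)) hse
    exact of_extension _ _ _ hse' hX hZ

lemma of_simple (Z : C) [Simple Z] : FinLength Z :=
  of_extension (0 : 0 ⟶ Z) (𝟙 Z) (by simp)
    (ShortComplex.Splitting.ofIsZeroOfIsIso _ (isZero_zero C) inferInstance).shortExact
    (of_isZero _ (isZero_zero C)) inferInstance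

lemma of_shortExact_of_iso {B : C} (hB : FinLength B) {S : ShortComplex C} (hS : S.ShortExact)
    (h₁ : FinLength S.X₁) (e : S.X₃ ≅ B) : FinLength S.X₂ := by
  induction hB generalizing S with
  | of_isZero B hB =>
    have := hS.isIso_f_iff.2 (hB.of_iso e)
    exact h₁.of_iso (asIso S.f)
  | @of_extension B' B Z s z w hse _ hZ ih =>
    -- the kernel of `S.X₂ ⟶ B ⟶ Z` is an extension of `B'` by `S.X₁`
    have := hS.epi_g
    have := hse.epi_g
    let g := S.g ≫ e.hom
    have hK : FinLength (kernel (g ≫ z)) := by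
      refine ih (shortExact_kernelCompSequence_of_epi g z) (h₁.of_iso ?_)
        (IsLimit.conePointUniqueUpToIso (kernelIsKernel z) hse.fIsKernel)
      exact IsLimit.conePointUniqueUpToIso hS.fIsKernel (kernelIsKernel S.g) ≪≫
        (kernelCompMono _ _).symm
    exact of_extension (kernel.ι (g ≫ z)) (g ≫ z) (kernel.condition _)
      { exact := ShortComplex.exact_of_f_is_kernel _ (kernelIsKernel _) } hK hZ

instance : ObjectProperty.IsClosedUnderExtensions (FinLength (C := C)) where
  prop_X₂_of_shortExact hS h₁ h₃ := h₃.of_shortExact_of_iso hS h₁ (Iso.refl _)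

lemma op {X : C} (h : FinLength X) : FinLength (op X) := by
  induction h with
  | of_isZero X hX => exact of_isZero _ hX.op
  | @of_extension X Y Z f g w hse _ hZ ih =>
    have := hZ
    exact ObjectProperty.prop_X₂_of_shortExact _ hse.op (of_simple (Opposite.op Z)) ih

end FinLength

namespace CategoryTheory.ObjectProperty

variable {P : ObjectProperty C} [P.IsSerreClass]

lemma isRightApproximation_of_epi_comp {S : ShortComplex C} (hS : S.ShortExact)
    {T : C} {t : T ⟶ S.X₁} (ht : P.IsRightApproximation t) {W : C} (w : W ⟶ S.X₂) [Mono w]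
    [Epi (w ≫ S.g)] (hW : P W) {s : T ⟶ W} (hs : s ≫ w = t ≫ S.f) :
    P.IsRightApproximation w := by
  have := hS.mono_f
  refine ⟨hW, fun X' hX' h => ?_⟩
  -- `W ⟶ W'` into the image `W'` of `W ⊞ X'` is epi: `W` covers `S.X₃`, and the kernel of
  -- `W' ⟶ S.X₃` is a `P`-object in `S.X₁`, so it factors through `T`, hence through `W`
  let φ := biprod.desc w h
  let ρ := biprod.inl ≫ factorThruImage φ
  have hρ : ρ ≫ image.ι φ = w := by simp [ρ, φ]
  have : Mono ρ := mono_of_mono_fac hρ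
  let q := image.ι φ ≫ S.g
  obtain ⟨τ, hτ⟩ : ∃ τ : kernel q ⟶ W, τ ≫ ρ = kernel.ι q := by
    have hW' : P (image φ) := P.prop_of_epi (factorThruImage φ) (P.prop_biprod hW hX')
    have hK : P (kernel q) := P.prop_of_mono (kernel.ι q) hW'
    obtain ⟨k, hk⟩ := hS.exact.lift' (kernel.ι q ≫ image.ι φ) (by simp [q])
    obtain ⟨u, hu⟩ := ht.2 _ hK k
    refine ⟨u ≫ s, ?_⟩
    rw [← cancel_mono (image.ι φ)]
    simp [hρ, hs, reassoc_of% hu, hk]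
  have : Epi (ρ ≫ q) := by rwa [← Category.assoc, hρ]
  have : Epi ρ := epi_of_epi_comp_of_kernel_ι_factors ρ q hτ
  have : IsIso ρ := isIso_of_mono_of_epi ρ
  refine ⟨biprod.inr ≫ factorThruImage φ ≫ inv ρ, ?_⟩
  simp [← hρ, φ]

lemma exists_isRightApproximation_of_shortExact {S : ShortComplex C} (hS : S.ShortExact)
    [Simple S.X₃] {T : C} {t : T ⟶ S.X₁} (ht : P.IsRightApproximation t) :
    ∃ (W : C) (w : W ⟶ S.X₂), P.IsRightApproximation w := by
  have := hS.mono_f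
  by_cases hcover : ∃ (X₀ : C) (h₀ : X₀ ⟶ S.X₂), P X₀ ∧ h₀ ≫ S.g ≠ 0
  · obtain ⟨X₀, h₀, hX₀, hne⟩ := hcover
    have : Epi (h₀ ≫ S.g) := epi_of_nonzero_to_simple hne
    let φ := biprod.desc (t ≫ S.f) h₀
    have : Epi (image.ι φ ≫ S.g) :=
      epi_of_epi_fac (f := biprod.inr ≫ factorThruImage φ) (h := h₀ ≫ S.g) (by simp [φ])
    exact ⟨_, _, isRightApproximation_of_epi_comp hS ht (image.ι φ)
      (P.prop_of_epi (factorThruImage φ) (P.prop_biprod ht.1 hX₀))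
      (s := biprod.inl ≫ factorThruImage φ) (by simp [φ])⟩
  · push Not at hcover
    refine ⟨T, t ≫ S.f, ht.1, fun X' hX' h => ?_⟩
    obtain ⟨k, hk⟩ := hS.exact.lift' h (hcover X' h hX')
    obtain ⟨u, hu⟩ := ht.2 X' hX' k
    exact ⟨u, by rw [reassoc_of% hu, hk]⟩

variable (P)

lemma exists_isRightApproximation {M : C} (hM : FinLength M) :
    ∃ (T : C) (t : T ⟶ M), P.IsRightApproximation t := by
  induction hM with
  | of_isZero M hM => exact ⟨M, 𝟙 M, P.prop_of_isZero hM, fun _ _ h => ⟨h, by simp⟩⟩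
  | of_extension f g w hse _ hZ ih =>
    obtain ⟨T, t, ht⟩ := ih
    have := hZ
    exact exists_isRightApproximation_of_shortExact hse ht

lemma exists_isLeftApproximation {M : C} (hM : FinLength M) :
    ∃ (X : C) (g : M ⟶ X), P.IsLeftApproximation g := by
  obtain ⟨T, t, ht⟩ := P.op.exists_isRightApproximation hM.op
  exact ⟨T.unop, t.unop, ht.unop⟩

end CategoryTheory.ObjectProperty

/-- If every object of the abelian category `C` has finite length, then for every simple
object `S` the subcategory `⟨S⟩` is functorially finite: every object admits a left
`⟨S⟩`-approximation and a right `⟨S⟩`-approximation. -/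
theorem statement1 (hlen : ∀ X : C, FinLength X) (S : C) [Simple S] :
    (∀ M : C, ∃ (X : C) (g : M ⟶ X), SClosure S X ∧
      ∀ (X' : C), SClosure S X' → ∀ h : M ⟶ X', ∃ u : X ⟶ X', g ≫ u = h) ∧
    (∀ M : C, ∃ (X : C) (f : X ⟶ M), SClosure S X ∧
      ∀ (X' : C), SClosure S X' → ∀ h : X' ⟶ M, ∃ u : X' ⟶ X, u ≫ f = h) :=
  ⟨fun M => ObjectProperty.exists_isLeftApproximation (SClosure S) (hlen M),
    fun M => ObjectProperty.exists_isRightApproximation (SClosure S) (hlen M)⟩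
end

section
/- Let k be a field with char(k) ≠ 2, let Σ be an S-graph all of whose vertices are internal, and let n be a positive even integer compatible with Σ. If some vertex of Σ has odd degree, then the graded Brauer graph algebra A(Σ,n) is not n-Calabi–Yau: there exists no linear functional tr : A(Σ,n)^n → k which is both symmetric (tr(ab) = (−1)^{|a||b|} tr(ba) for all homogeneous a, b with |a| + |b| = n) and nondegenerate (for every nonzero homogeneous a ∈ A(Σ,n) there is a homogeneous b with tr(ab) ≠ 0). -/
/-- An S-graph all of whose vertices are internal: a finite set of halfedges with a
fixed-point-free involution `τ` (whose orbits are the edges), a vertex map `vtx`, a cyclic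
order on the halfedges at each vertex (encoded by the cyclic successor map `succ`), and a
positive integer `d i = d(i, i+1)` for every halfedge `i`. -/
structure SGraph where
  /-- the type of halfedges -/
  H : Type
  fintypeH : Fintype H
  decEqH : DecidableEq H
  /-- the type of vertices -/
  V : Type
  fintypeV : Fintype V
  decEqV : DecidableEq V
  /-- the edge involution -/
  τ : H → H
  τ_invol : ∀ i, τ (τ i) = i
  τ_ne : ∀ i, τ i ≠ i
  /-- the vertex to which a halfedge is attached -/
  vtx : H → V
  /-- the cyclic successor `i ↦ i + 1` among the halfedges at a common vertex -/
  succ : H → H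
  vtx_succ : ∀ i, vtx (succ i) = vtx i
  cyclic : ∀ i j, vtx i = vtx j → ∃ m, succ^[m] i = j
  /-- `d i = d(i, i+1)` -/
  d : H → ℕ
  d_pos : ∀ i, 0 < d i

attribute [instance] SGraph.fintypeH SGraph.decEqH SGraph.fintypeV SGraph.decEqV

namespace SGraph

variable (Sg : SGraph)

/-- The halfedges attached to a given vertex. -/
def halfedgesAt (v : Sg.V) : Finset Sg.H := Finset.univ.filter fun i => Sg.vtx i = v

/-- The degree of a vertex: the sum of `d(i, i+1)` over the halfedges at it. -/
def deg (v : Sg.V) : ℕ := ∑ i ∈ Sg.halfedgesAt v, Sg.d i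

/-- The valency of a vertex: the number of halfedges at it. -/
def val (v : Sg.V) : ℕ := (Sg.halfedgesAt v).card

/-- The number of `succ`-steps from the halfedge `j` to the halfedge `i`
(`0` by convention if `i` is not on the `succ`-orbit of `j`). -/
noncomputable def distTo (j i : Sg.H) : ℕ := by
  classical
  exact if h : ∃ m, Sg.succ^[m] j = i then Nat.find h else 0

/-- `d(j, i)` for halfedges `j`, `i` at a common vertex:
`d(j,i) = d(j,j+1) + d(j+1,j+2) + ⋯ + d(i−1,i)` (so `d(j,j) = 0`). -/
noncomputable def dTo (j i : Sg.H) : ℕ :=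
  ∑ m ∈ Finset.range (Sg.distTo j i), Sg.d (Sg.succ^[m] j)

/-- The setoid identifying a halfedge with its partner under `τ`; its quotient is the set
of edges. -/
def edgeSetoid : Setoid Sg.H where
  r i j := j = i ∨ j = Sg.τ i
  iseqv := by
    refine ⟨fun i => Or.inl rfl, ?_, ?_⟩
    · rintro i j (rfl | rfl)
      · exact Or.inl rfl
      · exact Or.inr (Sg.τ_invol i).symm
    · rintro i j k (rfl | rfl) h
      · exact h
      · rcases h with rfl | rfl
        · exact Or.inr rfl
        · exact Or.inl (Sg.τ_invol i)

/-- The edges of the S-graph: `τ`-orbits of halfedges. -/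
def Edge : Type := Quotient Sg.edgeSetoid

noncomputable instance : Fintype Sg.Edge := by
  classical
  have : Finite Sg.Edge :=
    Finite.of_surjective (Quotient.mk Sg.edgeSetoid) fun q => Quot.exists_rep q
  exact Fintype.ofFinite _

/-- The edge containing a halfedge. -/
def edgeOf (i : Sg.H) : Sg.Edge := Quotient.mk Sg.edgeSetoid i

/-- An orientation of an S-graph compatible with the grading data: a map
`ε : H → ℤ/2` with `ε(τ i) ≠ ε(i)` and `d(i,i+1) ≡ ε(i) + ε(i+1) (mod 2)` for all `i`. -/
def Orientable : Prop :=
  ∃ ε : Sg.H → ZMod 2, (∀ i, ε (Sg.τ i) ≠ ε i) ∧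
    ∀ i, (Sg.d i : ZMod 2) = ε i + ε (Sg.succ i)

end SGraph

namespace SGraph

/-- The free `k`-algebra on the generators of the quiver presenting the graded Brauer
graph algebra: one idempotent generator for each edge (quiver vertex) and one arrow
generator `a_i` for each halfedge `i`. -/
abbrev FA (k : Type) [Field k] (Sg : SGraph) : Type := FreeAlgebra k (Sg.Edge ⊕ Sg.H)

/-- The idempotent generator `e_f` at the quiver vertex given by the edge `f`. -/
noncomputable def gE (k : Type) [Field k] (Sg : SGraph) (f : Sg.Edge) : FA k Sg :=
  FreeAlgebra.ι k (Sum.inl f)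

/-- The arrow generator `a_i` for the halfedge `i`, of degree `d(i, i+1)`. -/
noncomputable def gA (k : Type) [Field k] (Sg : SGraph) (i : Sg.H) : FA k Sg :=
  FreeAlgebra.ι k (Sum.inr i)

/-- The cycle `s_i = a_{i-1} ⋯ a_{i+1} a_i` going once around the vertex of `i`,
starting and ending at the edge of `i`. -/
noncomputable def loopOnce (k : Type) [Field k] (Sg : SGraph) (i : Sg.H) : FA k Sg :=
  ((List.range (Sg.val (Sg.vtx i))).reverse.map fun m => gA k Sg (Sg.succ^[m] i)).prod

/-- The cycle `c_i = (a_{i-1} ⋯ a_{i+1} a_i)^{n / deg v}` based at the edge of `i`,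
going `n / deg v` times around the vertex `v` of `i`. -/
noncomputable def cyc (k : Type) [Field k] (Sg : SGraph) (n : ℕ) (i : Sg.H) : FA k Sg :=
  loopOnce k Sg i ^ (n / Sg.deg (Sg.vtx i))

/-- The path `a^r_{i,j} = a_{i-1} ⋯ a_{j+1} a_j (a_{j-1} ⋯ a_{j+1} a_j)^r` from the
edge of `j` to the edge of `i` around their common vertex. -/
noncomputable def pathElem (k : Type) [Field k] (Sg : SGraph) (j i : Sg.H) (r : ℕ) :
    FA k Sg :=
  ((List.range (Sg.distTo j i)).reverse.map fun m => gA k Sg (Sg.succ^[m] j)).prod *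
    loopOnce k Sg j ^ r

/-- The defining relations of the graded Brauer graph algebra `A(Σ,n)`, presented as a
quotient of a free algebra: the quiver-vertex idempotent relations
(`e_f e_g = δ_{fg} e_f`, `∑ e_f = 1`, source/target relations for the arrows), the
monomial relations (i) `a_j a_i = 0` whenever `i+1` and `j` lie on the same edge but
`i+1 ≠ j`, and the cycle relations (ii) `c_i = (−1)^{n−1} c_{τ i}`. -/
inductive Rel (k : Type) [Field k] (Sg : SGraph) (n : ℕ) : FA k Sg → FA k Sg → Prop
  | orth (f g : Sg.Edge) : f ≠ g → Rel k Sg n (gE k Sg f * gE k Sg g) 0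
  | idem (f : Sg.Edge) : Rel k Sg n (gE k Sg f * gE k Sg f) (gE k Sg f)
  | sum_one : Rel k Sg n (∑ f : Sg.Edge, gE k Sg f) 1
  | target (i : Sg.H) :
      Rel k Sg n (gE k Sg (Sg.edgeOf (Sg.succ i)) * gA k Sg i) (gA k Sg i)
  | source (i : Sg.H) :
      Rel k Sg n (gA k Sg i * gE k Sg (Sg.edgeOf i)) (gA k Sg i)
  | comp_zero (i j : Sg.H) : Sg.edgeOf (Sg.succ i) = Sg.edgeOf j → Sg.succ i ≠ j →
      Rel k Sg n (gA k Sg j * gA k Sg i) 0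
  | cycle (i : Sg.H) :
      Rel k Sg n (cyc k Sg n i) (((-1 : k) ^ (n - 1)) • cyc k Sg n (Sg.τ i))

/-- The graded Brauer graph algebra `A(Σ,n)` of an S-graph with only internal vertices:
the quotient of the free algebra on the presenting quiver by the defining relations. -/
abbrev BGA (k : Type) [Field k] (Sg : SGraph) (n : ℕ) : Type := RingQuot (Rel k Sg n)

/-- The quotient map onto the graded Brauer graph algebra. -/
noncomputable def mkBGA (k : Type) [Field k] (Sg : SGraph) (n : ℕ) :
    FA k Sg →ₐ[k] BGA k Sg n :=
  RingQuot.mkAlgHom k (Rel k Sg n)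

/-- The weight of a generator: idempotents have degree `0`, and the arrow `a_i` has
degree `d(i, i+1)`. -/
def wt (Sg : SGraph) : (Sg.Edge ⊕ Sg.H) → ℕ := Sum.elim (fun _ => 0) Sg.d

/-- The degree-`m` homogeneous component of the free algebra: the span of the products
of generators of total weight `m`. -/
noncomputable def FAcomp (k : Type) [Field k] (Sg : SGraph) (m : ℕ) :
    Submodule k (FA k Sg) :=
  Submodule.span k
    { x | ∃ l : List (Sg.Edge ⊕ Sg.H),
        (l.map (wt Sg)).sum = m ∧ x = (l.map (FreeAlgebra.ι k)).prod }

/-- The degree-`m` homogeneous component `A(Σ,n)^m` of the graded Brauer graph algebra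
(the relations being homogeneous, these components form a grading). -/
noncomputable def BGAcomp (k : Type) [Field k] (Sg : SGraph) (n m : ℕ) :
    Submodule k (BGA k Sg n) :=
  (FAcomp k Sg m).map (mkBGA k Sg n).toLinearMap

end SGraph

/-!
Let `c_j` be the cycle of degree `n` around the vertex of the halfedge `j`, based at the edge
of `j`. It factors as `c_j = b_j a_j` and `c_{j+1} = a_j b_j` with `|a_j| = d(j,j+1)` and
`|b_j| = n - d(j,j+1)`, so for even `n` graded symmetry gives `tr c_{j+1} = (-1)^{d(j,j+1)} tr c_j`.
Going once around a vertex of odd degree yields `tr c_j = -tr c_j`, hence `tr c_j = 0` as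
`char k ≠ 2`. On the other hand every arrow annihilates `c_j`, so `c_j A ⊆ k c_j`, and
nondegeneracy forces `tr c_j ≠ 0` as soon as `c_j ≠ 0`. That `c_j ≠ 0` is checked on the module
`⊕_f P_f`, written down on an explicit basis, where `c_j` maps the top of `P_{edge j}` onto its
socle.
-/

lemma neg_one_pow_mul_self {R : Type*} [Monoid R] [HasDistribNeg R] (m : ℕ) :
    (-1 : R) ^ m * (-1) ^ m = 1 := by
  rw [← pow_add, ← two_mul, pow_mul, neg_one_sq, one_pow]

lemma neg_one_pow_mul_sub {R : Type*} [Monoid R] [HasDistribNeg R] {n d : ℕ} (hn : Even n)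
    (hd : d ≤ n) : (-1 : R) ^ (d * (n - d)) = (-1) ^ d := by
  rcases Nat.even_or_odd d with he | ho
  · rw [Even.neg_one_pow (he.mul_right _), Even.neg_one_pow he]
  · rw [Odd.neg_one_pow (ho.mul (Nat.Even.sub_odd hd hn ho)), Odd.neg_one_pow ho]

namespace SGraph

section CyclicOrder

variable (Sg : SGraph)

lemma mem_halfedgesAt {i : Sg.H} {v : Sg.V} : i ∈ Sg.halfedgesAt v ↔ Sg.vtx i = v := by
  simp [halfedgesAt]

lemma vtx_iterate_succ (j : Sg.H) (m : ℕ) : Sg.vtx (Sg.succ^[m] j) = Sg.vtx j :=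
  congrFun (Function.iterate_invariant (funext Sg.vtx_succ) m) j

lemma minimalPeriod_succ_pos (j : Sg.H) : 0 < Function.minimalPeriod Sg.succ j := by
  obtain ⟨m, hm⟩ := Sg.cyclic (Sg.succ j) j (Sg.vtx_succ j)
  exact Function.IsPeriodicPt.minimalPeriod_pos m.succ_pos
    (by rwa [Function.IsPeriodicPt, Function.IsFixedPt, Function.iterate_succ_apply])

lemma image_range_minimalPeriod_succ (j : Sg.H) :
    (Finset.range (Function.minimalPeriod Sg.succ j)).image (Sg.succ^[·] j)
      = Sg.halfedgesAt (Sg.vtx j) := by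
  ext a
  simp only [Finset.mem_image, Finset.mem_range, mem_halfedgesAt]
  constructor
  · rintro ⟨m, -, rfl⟩
    exact Sg.vtx_iterate_succ j m
  · intro ha
    obtain ⟨m, rfl⟩ := Sg.cyclic j a ha.symm
    exact ⟨m % _, Nat.mod_lt _ (Sg.minimalPeriod_succ_pos j),
      Function.iterate_mod_minimalPeriod_eq⟩

lemma injOn_iterate_succ (j : Sg.H) :
    Set.InjOn (Sg.succ^[·] j) (Finset.range (Function.minimalPeriod Sg.succ j)) := by
  rw [Finset.coe_range]
  exact Function.iterate_injOn_Iio_minimalPeriod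

lemma minimalPeriod_succ_eq_val (j : Sg.H) :
    Function.minimalPeriod Sg.succ j = Sg.val (Sg.vtx j) := by
  rw [val, ← image_range_minimalPeriod_succ, Finset.card_image_of_injOn (Sg.injOn_iterate_succ j),
    Finset.card_range]

lemma iterate_succ_val (j : Sg.H) : Sg.succ^[Sg.val (Sg.vtx j)] j = j := by
  rw [← minimalPeriod_succ_eq_val]
  exact Function.iterate_minimalPeriod

lemma sum_d_iterate_succ_val (j : Sg.H) :
    ∑ m ∈ Finset.range (Sg.val (Sg.vtx j)), Sg.d (Sg.succ^[m] j) = Sg.deg (Sg.vtx j) := by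
  rw [← minimalPeriod_succ_eq_val, deg, ← image_range_minimalPeriod_succ,
    Finset.sum_image (Sg.injOn_iterate_succ j)]

lemma sum_d_iterate_succ_add (j : Sg.H) (s t : ℕ) :
    ∑ m ∈ Finset.range (s + t), Sg.d (Sg.succ^[m] j)
      = ∑ m ∈ Finset.range s, Sg.d (Sg.succ^[m] j)
        + ∑ m ∈ Finset.range t, Sg.d (Sg.succ^[m] (Sg.succ^[s] j)) := by
  simp only [Finset.sum_range_add, ← Function.iterate_add_apply, add_comm]

lemma deg_pos (j : Sg.H) : 0 < Sg.deg (Sg.vtx j) :=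
  Finset.sum_pos (fun i _ => Sg.d_pos i) ⟨j, Sg.mem_halfedgesAt.mpr rfl⟩

lemma d_le_deg (j : Sg.H) : Sg.d j ≤ Sg.deg (Sg.vtx j) :=
  Finset.single_le_sum (fun i _ => Nat.zero_le (Sg.d i)) (Sg.mem_halfedgesAt.mpr rfl)

lemma edgeOf_τ (i : Sg.H) : Sg.edgeOf (Sg.τ i) = Sg.edgeOf i :=
  Quotient.sound (Or.inr (Sg.τ_invol i).symm)

lemma out_edgeOf (j : Sg.H) : (Sg.edgeOf j).out = j ∨ (Sg.edgeOf j).out = Sg.τ j := by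
  rcases Quotient.exact (Quotient.out_eq (Sg.edgeOf j)) with h | h
  · exact Or.inl h.symm
  · have h' := congrArg Sg.τ h
    rw [Sg.τ_invol] at h'
    exact Or.inr h'.symm

/-- The number of arrows in the cycle `c_j`. -/
def cycLength (n : ℕ) (j : Sg.H) : ℕ := n / Sg.deg (Sg.vtx j) * Sg.val (Sg.vtx j)

lemma cycLength_pos {n : ℕ} {j : Sg.H} (hn : 0 < n) (hdvd : Sg.deg (Sg.vtx j) ∣ n) :
    0 < Sg.cycLength n j :=
  Nat.mul_pos (Nat.div_pos (Nat.le_of_dvd hn hdvd) (Sg.deg_pos j))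
    (Finset.card_pos.mpr ⟨j, Sg.mem_halfedgesAt.mpr rfl⟩)

lemma cycLength_iterate_succ (n m : ℕ) (j : Sg.H) :
    Sg.cycLength n (Sg.succ^[m] j) = Sg.cycLength n j := by
  rw [cycLength, cycLength, vtx_iterate_succ]

lemma iterate_succ_mul_val (r : ℕ) (j : Sg.H) : Sg.succ^[r * Sg.val (Sg.vtx j)] j = j := by
  induction r with
  | zero => simp
  | succ r ih => rw [Nat.succ_mul, Function.iterate_add_apply, iterate_succ_val, ih]

lemma iterate_succ_cycLength (n : ℕ) (j : Sg.H) : Sg.succ^[Sg.cycLength n j] j = j :=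
  Sg.iterate_succ_mul_val _ j

lemma sum_d_iterate_succ_cycLength {n : ℕ} {j : Sg.H} (hdvd : Sg.deg (Sg.vtx j) ∣ n) :
    ∑ m ∈ Finset.range (Sg.cycLength n j), Sg.d (Sg.succ^[m] j) = n := by
  suffices ∀ r, ∑ m ∈ Finset.range (r * Sg.val (Sg.vtx j)), Sg.d (Sg.succ^[m] j)
      = r * Sg.deg (Sg.vtx j) by
    rw [cycLength, this, Nat.div_mul_cancel hdvd]
  intro r
  induction r with
  | zero => simp
  | succ r ih =>
    rw [Nat.succ_mul, sum_d_iterate_succ_add, ih, iterate_succ_mul_val, sum_d_iterate_succ_val,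
      Nat.succ_mul]

end CyclicOrder

section FreeAlgebra

variable (k : Type) [Field k] (Sg : SGraph)

lemma list_prod_ι_mem_FAcomp (l : List (Sg.Edge ⊕ Sg.H)) :
    (l.map (FreeAlgebra.ι k)).prod ∈ FAcomp k Sg (l.map (wt Sg)).sum :=
  Submodule.subset_span ⟨l, rfl, rfl⟩

instance : SetLike.GradedMonoid (FAcomp k Sg) where
  one_mem := list_prod_ι_mem_FAcomp k Sg []
  mul_mem p q x y hx hy := by
    have : FAcomp k Sg p * FAcomp k Sg q ≤ FAcomp k Sg (p + q) := by
      rw [FAcomp, FAcomp, Submodule.span_mul_span, Submodule.span_le]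
      rintro _ ⟨_, ⟨l, rfl, rfl⟩, _, ⟨l', rfl, rfl⟩, rfl⟩
      simpa using list_prod_ι_mem_FAcomp k Sg (l ++ l')
    exact this (Submodule.mul_mem_mul hx hy)

lemma gA_mem_FAcomp (j : Sg.H) : gA k Sg j ∈ FAcomp k Sg (Sg.d j) := by
  simpa [wt, gA] using list_prod_ι_mem_FAcomp k Sg [Sum.inr j]

/-- The path `a_{j+t-1} ⋯ a_{j+1} a_j` of `t` arrows around the vertex of `j`. -/
noncomputable def arrowPath (j : Sg.H) (t : ℕ) : FA k Sg :=
  ((List.range t).reverse.map fun m => gA k Sg (Sg.succ^[m] j)).prod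

variable {k Sg}

@[simp]
lemma arrowPath_zero (j : Sg.H) : arrowPath k Sg j 0 = 1 := rfl

lemma arrowPath_succ (j : Sg.H) (t : ℕ) :
    arrowPath k Sg j (t + 1) = gA k Sg (Sg.succ^[t] j) * arrowPath k Sg j t := by
  simp [arrowPath, List.range_succ]

lemma arrowPath_one (j : Sg.H) : arrowPath k Sg j 1 = gA k Sg j := by
  simp [arrowPath_succ]

lemma arrowPath_add (j : Sg.H) (s t : ℕ) :
    arrowPath k Sg j (s + t) = arrowPath k Sg (Sg.succ^[t] j) s * arrowPath k Sg j t := by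
  induction s with
  | zero => simp
  | succ s ih =>
    rw [Nat.add_right_comm, arrowPath_succ, ih, arrowPath_succ, ← Function.iterate_add_apply,
      mul_assoc]

lemma cyc_eq_arrowPath (n : ℕ) (j : Sg.H) :
    cyc k Sg n j = arrowPath k Sg j (Sg.cycLength n j) := by
  suffices ∀ r, loopOnce k Sg j ^ r = arrowPath k Sg j (r * Sg.val (Sg.vtx j)) from this _
  intro r
  induction r with
  | zero => simp
  | succ r ih => rw [pow_succ, ih, Nat.succ_mul, arrowPath_add, Sg.iterate_succ_val]; rfl

lemma arrowPath_mem_FAcomp (j : Sg.H) (t : ℕ) :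
    arrowPath k Sg j t ∈ FAcomp k Sg (∑ m ∈ Finset.range t, Sg.d (Sg.succ^[m] j)) := by
  induction t with
  | zero => exact SetLike.GradedOne.one_mem
  | succ t ih =>
    rw [arrowPath_succ, Finset.sum_range_succ, add_comm]
    exact SetLike.mul_mem_graded (gA_mem_FAcomp k Sg _) ih

lemma cyc_mem_FAcomp {n : ℕ} {j : Sg.H} (hdvd : Sg.deg (Sg.vtx j) ∣ n) :
    cyc k Sg n j ∈ FAcomp k Sg n := by
  simpa [cyc_eq_arrowPath, Sg.sum_d_iterate_succ_cycLength hdvd] using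
    arrowPath_mem_FAcomp (k := k) j (Sg.cycLength n j)

variable (k) in
/-- The path `b_j` of degree `n - d(j, j+1)` with `c_j = b_j a_j` and `c_{j+1} = a_j b_j`. -/
noncomputable def cycComplement (n : ℕ) (j : Sg.H) : FA k Sg :=
  arrowPath k Sg (Sg.succ j) (Sg.cycLength n j - 1)

lemma cyc_eq_cycComplement_mul {n : ℕ} {j : Sg.H} (hN : 0 < Sg.cycLength n j) :
    cyc k Sg n j = cycComplement k n j * gA k Sg j := by
  rw [cyc_eq_arrowPath, ← Nat.sub_add_cancel hN, arrowPath_add, arrowPath_one]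
  rfl

lemma gA_mul_cycComplement {n : ℕ} {j : Sg.H} (hN : 0 < Sg.cycLength n j) :
    gA k Sg j * cycComplement k n j = cyc k Sg n (Sg.succ j) := by
  have hsucc : Sg.succ^[Sg.cycLength n j - 1] (Sg.succ j) = j := by
    rw [← Function.iterate_succ_apply, Nat.succ_eq_add_one, Nat.sub_add_cancel hN,
      Sg.iterate_succ_cycLength]
  rw [cyc_eq_arrowPath, ← Function.iterate_one Sg.succ, Sg.cycLength_iterate_succ,
    Function.iterate_one, ← Nat.add_sub_cancel' hN, arrowPath_add, arrowPath_one, hsucc]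
  rfl

lemma cycComplement_mem_FAcomp {n : ℕ} {j : Sg.H} (hn : 0 < n)
    (hdvd : Sg.deg (Sg.vtx j) ∣ n) : cycComplement k n j ∈ FAcomp k Sg (n - Sg.d j) := by
  have hsum := Sg.sum_d_iterate_succ_cycLength hdvd
  rw [← Nat.sub_add_cancel (show 1 ≤ _ from Sg.cycLength_pos hn hdvd),
    Finset.sum_range_succ'] at hsum
  simp only [Function.iterate_succ_apply, Function.iterate_zero_apply] at hsum
  unfold cycComplement
  convert arrowPath_mem_FAcomp (k := k) (Sg.succ j) (Sg.cycLength n j - 1) using 2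
  omega

end FreeAlgebra

section Quotient

variable {k : Type} [Field k] {Sg : SGraph} {n : ℕ}

lemma mkBGA_eq_of_rel {x y : FA k Sg} (h : Rel k Sg n x y) :
    mkBGA k Sg n x = mkBGA k Sg n y :=
  RingQuot.mkAlgHom_rel k h

lemma mk_gE_mul_gE_of_ne {f g : Sg.Edge} (h : f ≠ g) :
    mkBGA k Sg n (gE k Sg f) * mkBGA k Sg n (gE k Sg g) = 0 := by
  rw [← map_mul, mkBGA_eq_of_rel (Rel.orth f g h), map_zero]

lemma mk_gA_mul_gA_of_succ_ne {i j : Sg.H} (h : Sg.succ i ≠ j) :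
    mkBGA k Sg n (gA k Sg j) * mkBGA k Sg n (gA k Sg i) = 0 := by
  by_cases he : Sg.edgeOf (Sg.succ i) = Sg.edgeOf j
  · rw [← map_mul, mkBGA_eq_of_rel (Rel.comp_zero i j he h), map_zero]
  · rw [← mkBGA_eq_of_rel (Rel.source j), ← mkBGA_eq_of_rel (n := n) (Rel.target i), map_mul,
      map_mul, mul_assoc, ← mul_assoc (mkBGA k Sg n (gE k Sg _)), mk_gE_mul_gE_of_ne (Ne.symm he),
      zero_mul, mul_zero]

lemma mk_cyc_mul_gE_edgeOf {j : Sg.H} (hN : 0 < Sg.cycLength n j) :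
    mkBGA k Sg n (cyc k Sg n j) * mkBGA k Sg n (gE k Sg (Sg.edgeOf j))
      = mkBGA k Sg n (cyc k Sg n j) := by
  rw [cyc_eq_cycComplement_mul hN, map_mul, mul_assoc, ← map_mul (mkBGA k Sg n) (gA k Sg j),
    mkBGA_eq_of_rel (Rel.source j)]

lemma mk_cyc_mul_gE_of_ne {j : Sg.H} (hN : 0 < Sg.cycLength n j) {f : Sg.Edge}
    (hf : f ≠ Sg.edgeOf j) : mkBGA k Sg n (cyc k Sg n j) * mkBGA k Sg n (gE k Sg f) = 0 := by
  rw [cyc_eq_cycComplement_mul hN, map_mul, ← mkBGA_eq_of_rel (Rel.source j), map_mul,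
    mul_assoc, mul_assoc, mk_gE_mul_gE_of_ne (Ne.symm hf), mul_zero, mul_zero]

lemma mk_cyc_mul_gA (hn : 0 < n) (hdvd : ∀ v : Sg.V, Sg.deg v ∣ n) (j m : Sg.H) :
    mkBGA k Sg n (cyc k Sg n j) * mkBGA k Sg n (gA k Sg m) = 0 := by
  have hN (i : Sg.H) : 0 < Sg.cycLength n i := Sg.cycLength_pos hn (hdvd _)
  by_cases hc : Sg.succ m = j
  · -- `a_m` leads into `j`, so the other presentation `c_j = ± c_{τ j}` ends in `a_{τ j}`
    rw [mkBGA_eq_of_rel (Rel.cycle j), map_smul, smul_mul_assoc, cyc_eq_cycComplement_mul (hN _),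
      map_mul, mul_assoc, mk_gA_mul_gA_of_succ_ne (by rw [hc]; exact (Sg.τ_ne j).symm),
      mul_zero, smul_zero]
  · rw [cyc_eq_cycComplement_mul (hN j), map_mul, mul_assoc, mk_gA_mul_gA_of_succ_ne hc,
      mul_zero]

lemma mk_cyc_mul_mem_span (hn : 0 < n) (hdvd : ∀ v : Sg.V, Sg.deg v ∣ n) (j : Sg.H)
    (b : BGA k Sg n) : mkBGA k Sg n (cyc k Sg n j) * b ∈ k ∙ mkBGA k Sg n (cyc k Sg n j) := by
  obtain ⟨x, rfl⟩ := RingQuot.mkAlgHom_surjective k (Rel k Sg n) b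
  change _ * mkBGA k Sg n x ∈ _
  induction x using FreeAlgebra.induction with
  | grade0 r =>
    rw [AlgHom.commutes, ← Algebra.commutes, ← Algebra.smul_def]
    exact Submodule.smul_mem _ r (Submodule.mem_span_singleton_self _)
  | grade1 x =>
    rcases x with f | m
    · have hN := Sg.cycLength_pos hn (hdvd (Sg.vtx j))
      rw [← gE]
      by_cases hf : f = Sg.edgeOf j
      · rw [hf, mk_cyc_mul_gE_edgeOf hN]
        exact Submodule.mem_span_singleton_self _
      · rw [mk_cyc_mul_gE_of_ne hN hf]
        exact Submodule.zero_mem _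
    · rw [← gA, mk_cyc_mul_gA hn hdvd]
      exact Submodule.zero_mem _
  | mul x y hx hy =>
    obtain ⟨μ, hμ⟩ := Submodule.mem_span_singleton.mp hx
    rw [map_mul, ← mul_assoc, ← hμ, smul_mul_assoc]
    exact Submodule.smul_mem _ μ hy
  | add x y hx hy =>
    rw [map_add, mul_add]
    exact add_mem hx hy

end Quotient

/-- A basis of `⊕_f P_f`, the sum of the indecomposable projectives: `top f` is `e_f`,
`path j ℓ` (for `0 < ℓ < cycLength n j`) the path of `ℓ` arrows starting with `a_j`, and
`socle f` spans the common socle `c_j = ± c_{τ j}` of `P_f`, where `f` is the edge of `j`.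
The remaining vectors `path j ℓ` are killed by every arrow. -/
inductive RepBasis (Sg : SGraph) : Type
  | top : Sg.Edge → RepBasis Sg
  | path : Sg.H → ℕ → RepBasis Sg
  | socle : Sg.Edge → RepBasis Sg

def RepBasis.edge {Sg : SGraph} : Sg.RepBasis → Sg.Edge
  | top f => f
  | path j ℓ => Sg.edgeOf (Sg.succ^[ℓ] j)
  | socle f => f

section Representation

open scoped Classical

variable {k : Type} [Field k] {Sg : SGraph}

variable (Sg) in
/-- For `ε = (-1)^(n-1)` these signs make the cycle relation `c_j = ε c_{τ j}` hold on the
socle. -/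
noncomputable def edgeSign (ε : k) (j : Sg.H) : k := if (Sg.edgeOf j).out = j then 1 else ε

lemma edgeSign_τ {ε : k} (hε : ε * ε = 1) (j : Sg.H) :
    Sg.edgeSign ε (Sg.τ j) = ε * Sg.edgeSign ε j := by
  have hτ : Sg.τ j ≠ j := Sg.τ_ne j
  rcases Sg.out_edgeOf j with h | h <;>
    simp [edgeSign, Sg.edgeOf_τ, h, hτ, hτ.symm, hε]

lemma edgeSign_ne_zero {ε : k} (hε : ε * ε = 1) (j : Sg.H) : Sg.edgeSign ε j ≠ 0 := by
  unfold edgeSign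
  split_ifs
  · exact one_ne_zero
  · exact left_ne_zero_of_mul_eq_one hε

variable (k Sg) (n : ℕ)

/-- The vector of the path of `ℓ` arrows starting with `a_j`. -/
noncomputable def pathVec (j : Sg.H) (ℓ : ℕ) : Sg.RepBasis →₀ k :=
  if ℓ = Sg.cycLength n j then
    Sg.edgeSign ((-1 : k) ^ (n - 1)) j • Finsupp.single (.socle (Sg.edgeOf j)) 1
  else Finsupp.single (.path j ℓ) 1

noncomputable def genAction : Sg.Edge ⊕ Sg.H → Sg.RepBasis → (Sg.RepBasis →₀ k)
  | .inl f, b => if b.edge = f then Finsupp.single b 1 else 0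
  | .inr i, .top f => if Sg.edgeOf i = f then pathVec k Sg n i 1 else 0
  | .inr i, .path j ℓ =>
      if Sg.succ^[ℓ] j = i ∧ 0 < ℓ ∧ ℓ < Sg.cycLength n j then pathVec k Sg n j (ℓ + 1) else 0
  | .inr _, .socle _ => 0

noncomputable def rep : FA k Sg →ₐ[k] Module.End k (Sg.RepBasis →₀ k) :=
  FreeAlgebra.lift k fun x => Finsupp.linearCombination k (genAction k Sg n x)

variable {k Sg n}

lemma rep_ι_single (x : Sg.Edge ⊕ Sg.H) (b : Sg.RepBasis) (c : k) :
    rep k Sg n (FreeAlgebra.ι k x) (Finsupp.single b c) = c • genAction k Sg n x b := by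
  simp [rep]

lemma rep_gE_single (f : Sg.Edge) (b : Sg.RepBasis) (c : k) :
    rep k Sg n (gE k Sg f) (Finsupp.single b c)
      = if b.edge = f then Finsupp.single b c else 0 := by
  rw [gE, rep_ι_single, genAction]
  split_ifs <;> simp

lemma rep_gA_single (i : Sg.H) (b : Sg.RepBasis) :
    rep k Sg n (gA k Sg i) (Finsupp.single b 1) = genAction k Sg n (.inr i) b := by
  rw [gA, rep_ι_single, one_smul]

lemma lhom_ext_single_one {L L' : Module.End k (Sg.RepBasis →₀ k)}
    (h : ∀ b, L (Finsupp.single b 1) = L' (Finsupp.single b 1)) : L = L' :=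
  Finsupp.basisSingleOne.ext fun b => by simpa using h b

lemma rep_gE_pathVec (j : Sg.H) (ℓ : ℕ) :
    rep k Sg n (gE k Sg (Sg.edgeOf (Sg.succ^[ℓ] j))) (pathVec k Sg n j ℓ)
      = pathVec k Sg n j ℓ := by
  unfold pathVec
  split_ifs with h
  · rw [map_smul, rep_gE_single, if_pos (by rw [RepBasis.edge, h, Sg.iterate_succ_cycLength])]
  · exact (rep_gE_single _ _ _).trans (if_pos rfl)

lemma rep_gA_pathVec_of_ne {m j : Sg.H} {ℓ : ℕ} (h : Sg.succ^[ℓ] j ≠ m) :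
    rep k Sg n (gA k Sg m) (pathVec k Sg n j ℓ) = 0 := by
  unfold pathVec
  split_ifs
  · rw [map_smul, rep_gA_single, genAction, smul_zero]
  · rw [rep_gA_single, genAction, if_neg (fun hc => h hc.1)]

lemma rep_gA_pathVec_cycLength (m j : Sg.H) :
    rep k Sg n (gA k Sg m) (pathVec k Sg n j (Sg.cycLength n j)) = 0 := by
  rw [pathVec, if_pos rfl, map_smul, rep_gA_single, genAction, smul_zero]

lemma rep_gA_pathVec {j : Sg.H} {ℓ : ℕ} (h0 : 0 < ℓ) (hℓ : ℓ < Sg.cycLength n j) :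
    rep k Sg n (gA k Sg (Sg.succ^[ℓ] j)) (pathVec k Sg n j ℓ) = pathVec k Sg n j (ℓ + 1) := by
  rw [pathVec, if_neg hℓ.ne, rep_gA_single, genAction, if_pos ⟨rfl, h0, hℓ⟩]

lemma rep_arrowPath_pathVec {j : Sg.H} {ℓ t : ℕ} (h0 : 0 < ℓ) (h : ℓ + t ≤ Sg.cycLength n j) :
    rep k Sg n (arrowPath k Sg (Sg.succ^[ℓ] j) t) (pathVec k Sg n j ℓ)
      = pathVec k Sg n j (ℓ + t) := by
  induction t with
  | zero => simp
  | succ t ih =>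
    rw [arrowPath_succ, map_mul, Module.End.mul_apply, ih (by omega),
      ← Function.iterate_add_apply, add_comm t ℓ, rep_gA_pathVec (by omega) (by omega),
      add_assoc]

lemma rep_cyc_single {i : Sg.H} (hN : 0 < Sg.cycLength n i) (b : Sg.RepBasis) :
    rep k Sg n (cyc k Sg n i) (Finsupp.single b 1)
      = if b = .top (Sg.edgeOf i) then
          Sg.edgeSign ((-1 : k) ^ (n - 1)) i • Finsupp.single (.socle (Sg.edgeOf i)) 1
        else 0 := by
  rw [cyc_eq_arrowPath, show Sg.cycLength n i = (Sg.cycLength n i - 1) + 1 by omega,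
    arrowPath_add, arrowPath_one, map_mul, Module.End.mul_apply, rep_gA_single]
  cases b with
  | top f =>
    by_cases hf : Sg.edgeOf i = f
    · subst hf
      rw [genAction, if_pos rfl, if_pos rfl, rep_arrowPath_pathVec one_pos (by omega),
        show 1 + (Sg.cycLength n i - 1) = Sg.cycLength n i by omega, pathVec, if_pos rfl]
    · rw [genAction, if_neg hf, map_zero, if_neg (by simpa using Ne.symm hf)]
  | path j ℓ =>
    rw [genAction, if_neg (show RepBasis.path j ℓ ≠ .top _ by simp)]
    split_ifs with hc
    · obtain ⟨rfl, hℓ, hℓN⟩ := hc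
      -- the remaining arrows reach the socle after `cycLength - ℓ - 1` steps and then kill it
      obtain ⟨t, ht⟩ : ∃ t, Sg.cycLength n j = ℓ + 1 + t := ⟨_, (Nat.add_sub_of_le hℓN).symm⟩
      obtain ⟨s, rfl⟩ : ∃ s, ℓ = s + 1 := ⟨ℓ - 1, by omega⟩
      rw [Sg.cycLength_iterate_succ, ht, show s + 1 + 1 + t - 1 = (s + 1) + t by omega,
        arrowPath_add, map_mul, Module.End.mul_apply, ← Function.iterate_add_apply Sg.succ 1,
        show 1 + (s + 1) = s + 1 + 1 by omega, rep_arrowPath_pathVec (by omega) ht.ge, ← ht,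
        arrowPath_add, arrowPath_one, map_mul, Module.End.mul_apply,
        rep_gA_pathVec_cycLength, map_zero]
    · rw [map_zero]
  | socle f => rw [genAction, map_zero, if_neg (show RepBasis.socle f ≠ .top _ by simp)]

lemma rep_target (i : Sg.H) :
    rep k Sg n (gE k Sg (Sg.edgeOf (Sg.succ i)) * gA k Sg i) = rep k Sg n (gA k Sg i) := by
  refine lhom_ext_single_one fun b => ?_
  rw [map_mul, Module.End.mul_apply, rep_gA_single]
  cases b with
  | top f =>
    rw [genAction]
    split_ifs
    · exact rep_gE_pathVec i 1
    · rw [map_zero]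
  | path j ℓ =>
    rw [genAction]
    split_ifs with hc
    · rw [← hc.1, ← Function.iterate_succ_apply' Sg.succ ℓ j, rep_gE_pathVec]
    · rw [map_zero]
  | socle f => rw [genAction, map_zero]

lemma rep_source (i : Sg.H) :
    rep k Sg n (gA k Sg i * gE k Sg (Sg.edgeOf i)) = rep k Sg n (gA k Sg i) := by
  refine lhom_ext_single_one fun b => ?_
  rw [map_mul, Module.End.mul_apply, rep_gE_single]
  split_ifs with hb
  · rfl
  · rw [map_zero, rep_gA_single]
    cases b with
    | top f => rw [genAction, if_neg (Ne.symm hb : Sg.edgeOf i ≠ f)]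
    | path j ℓ => rw [genAction, if_neg fun hc => hb (by rw [RepBasis.edge, hc.1])]
    | socle f => rfl

lemma rep_comp_zero {i j : Sg.H} (h : Sg.succ i ≠ j) :
    rep k Sg n (gA k Sg j * gA k Sg i) = 0 := by
  refine lhom_ext_single_one fun b => ?_
  rw [map_mul, Module.End.mul_apply, rep_gA_single, LinearMap.zero_apply]
  cases b with
  | top f =>
    rw [genAction]
    split_ifs
    · exact rep_gA_pathVec_of_ne h
    · rw [map_zero]
  | path j ℓ =>
    rw [genAction]
    split_ifs with hc
    · exact rep_gA_pathVec_of_ne (by rwa [Function.iterate_succ_apply', hc.1])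
    · rw [map_zero]
  | socle f => rw [genAction, map_zero]

lemma rep_cycle (hn : 0 < n) (hdvd : ∀ v : Sg.V, Sg.deg v ∣ n) (i : Sg.H) :
    rep k Sg n (cyc k Sg n i) = rep k Sg n ((-1 : k) ^ (n - 1) • cyc k Sg n (Sg.τ i)) := by
  have hε := neg_one_pow_mul_self (R := k) (n - 1)
  refine lhom_ext_single_one fun b => ?_
  rw [map_smul, LinearMap.smul_apply, rep_cyc_single (Sg.cycLength_pos hn (hdvd _)),
    rep_cyc_single (Sg.cycLength_pos hn (hdvd _)), Sg.edgeOf_τ, edgeSign_τ hε]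
  split_ifs
  · rw [smul_smul, ← mul_assoc, hε, one_mul]
  · rw [smul_zero]

lemma rep_eq_of_rel (hn : 0 < n) (hdvd : ∀ v : Sg.V, Sg.deg v ∣ n) {x y : FA k Sg}
    (h : Rel k Sg n x y) : rep k Sg n x = rep k Sg n y := by
  cases h with
  | orth f g hfg =>
    refine lhom_ext_single_one fun b => ?_
    by_cases hb : b.edge = g <;> simp [rep_gE_single, hb, Ne.symm hfg]
  | idem f =>
    refine lhom_ext_single_one fun b => ?_
    by_cases hb : b.edge = f <;> simp [rep_gE_single, hb]
  | sum_one =>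
    refine lhom_ext_single_one fun b => ?_
    simp [rep_gE_single]
  | target i => exact rep_target i
  | source i => exact rep_source i
  | comp_zero i j _ h => rw [rep_comp_zero h, map_zero]
  | cycle i => exact rep_cycle hn hdvd i

lemma mk_cyc_ne_zero (hn : 0 < n) (hdvd : ∀ v : Sg.V, Sg.deg v ∣ n) (i : Sg.H) :
    mkBGA k Sg n (cyc k Sg n i) ≠ 0 := by
  intro h
  have hrep := congrArg (RingQuot.liftAlgHom k ⟨rep k Sg n, fun _ _ => rep_eq_of_rel hn hdvd⟩) h
  rw [mkBGA, RingQuot.liftAlgHom_mkAlgHom_apply, map_zero] at hrep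
  have htop := LinearMap.congr_fun hrep (Finsupp.single (.top (Sg.edgeOf i)) 1)
  rw [rep_cyc_single (Sg.cycLength_pos hn (hdvd _)), if_pos rfl, LinearMap.zero_apply,
    smul_eq_zero] at htop
  exact htop.elim (edgeSign_ne_zero (neg_one_pow_mul_self _) i) (by simp)

end Representation

section CalabiYau

variable {k : Type} [Field k] {Sg : SGraph} {n : ℕ}

def IsGradedSymmetric (tr : BGAcomp k Sg n n →ₗ[k] k) : Prop :=
  ∀ p q : ℕ, p + q = n → ∀ a ∈ BGAcomp k Sg n p, ∀ b ∈ BGAcomp k Sg n q,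
    ∀ (hab : a * b ∈ BGAcomp k Sg n n) (hba : b * a ∈ BGAcomp k Sg n n),
      tr ⟨a * b, hab⟩ = (-1 : k) ^ (p * q) * tr ⟨b * a, hba⟩

variable (k) in
noncomputable def cycTop (hdvd : ∀ v : Sg.V, Sg.deg v ∣ n) (j : Sg.H) : BGAcomp k Sg n n :=
  ⟨mkBGA k Sg n (cyc k Sg n j), Submodule.mem_map_of_mem (cyc_mem_FAcomp (hdvd _))⟩

lemma trace_cycTop_succ (hn : 0 < n) (heven : Even n) (hdvd : ∀ v : Sg.V, Sg.deg v ∣ n)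
    {tr : BGAcomp k Sg n n →ₗ[k] k} (hsym : IsGradedSymmetric tr) (j : Sg.H) :
    tr (cycTop k hdvd (Sg.succ j)) = (-1 : k) ^ Sg.d j * tr (cycTop k hdvd j) := by
  have hN := Sg.cycLength_pos hn (hdvd (Sg.vtx j))
  have hd : Sg.d j ≤ n := (Sg.d_le_deg j).trans (Nat.le_of_dvd hn (hdvd _))
  have ha : mkBGA k Sg n (gA k Sg j) ∈ BGAcomp k Sg n (Sg.d j) :=
    Submodule.mem_map_of_mem (gA_mem_FAcomp k Sg j)
  have hb : mkBGA k Sg n (cycComplement k n j) ∈ BGAcomp k Sg n (n - Sg.d j) :=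
    Submodule.mem_map_of_mem (cycComplement_mem_FAcomp hn (hdvd _))
  have hab : mkBGA k Sg n (gA k Sg j) * mkBGA k Sg n (cycComplement k n j)
      = mkBGA k Sg n (cyc k Sg n (Sg.succ j)) := by rw [← map_mul, gA_mul_cycComplement hN]
  have hba : mkBGA k Sg n (cycComplement k n j) * mkBGA k Sg n (gA k Sg j)
      = mkBGA k Sg n (cyc k Sg n j) := by rw [← map_mul, cyc_eq_cycComplement_mul hN]
  calc tr (cycTop k hdvd (Sg.succ j))
      = tr ⟨_, hab ▸ (cycTop k hdvd (Sg.succ j)).2⟩ := congrArg tr (Subtype.ext hab.symm)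
    _ = (-1 : k) ^ (Sg.d j * (n - Sg.d j)) * tr ⟨_, hba ▸ (cycTop k hdvd j).2⟩ :=
      hsym _ _ (Nat.add_sub_of_le hd) _ ha _ hb _ _
    _ = (-1 : k) ^ Sg.d j * tr (cycTop k hdvd j) := by
      rw [neg_one_pow_mul_sub heven hd]
      exact congrArg _ (congrArg tr (Subtype.ext hba))

lemma trace_cycTop_iterate_succ (hn : 0 < n) (heven : Even n)
    (hdvd : ∀ v : Sg.V, Sg.deg v ∣ n) {tr : BGAcomp k Sg n n →ₗ[k] k}
    (hsym : IsGradedSymmetric tr) (j : Sg.H) (m : ℕ) :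
    tr (cycTop k hdvd (Sg.succ^[m] j))
      = (-1 : k) ^ (∑ l ∈ Finset.range m, Sg.d (Sg.succ^[l] j)) * tr (cycTop k hdvd j) := by
  induction m with
  | zero => simp
  | succ m ih =>
    rw [Function.iterate_succ_apply', trace_cycTop_succ hn heven hdvd hsym, ih,
      Finset.sum_range_succ, pow_add, mul_comm ((-1 : k) ^ _) ((-1 : k) ^ Sg.d _), mul_assoc]

lemma trace_cycTop_eq_zero (hchar : ringChar k ≠ 2) (hn : 0 < n) (heven : Even n)
    (hdvd : ∀ v : Sg.V, Sg.deg v ∣ n) {tr : BGAcomp k Sg n n →ₗ[k] k}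
    (hsym : IsGradedSymmetric tr) {j : Sg.H} (hodd : Odd (Sg.deg (Sg.vtx j))) :
    tr (cycTop k hdvd j) = 0 := by
  have h := trace_cycTop_iterate_succ hn heven hdvd hsym j (Sg.val (Sg.vtx j))
  rw [Sg.iterate_succ_val, Sg.sum_d_iterate_succ_val, hodd.neg_one_pow, neg_one_mul,
    eq_neg_iff_add_eq_zero, ← two_mul] at h
  exact (mul_eq_zero.mp h).resolve_left (Ring.two_ne_zero hchar)

end CalabiYau

end SGraph

open SGraph

theorem statement4 (k : Type) [Field k] (hchar : ringChar k ≠ 2)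
    (Sg : SGraph) (n : ℕ) (hn : 0 < n) (heven : Even n)
    (hcompat : ∀ v : Sg.V, Sg.deg v ∣ n)
    (hodd : ∃ v : Sg.V, Odd (Sg.deg v)) :
    ¬ ∃ tr : BGAcomp k Sg n n →ₗ[k] k,
      (∀ p q : ℕ, p + q = n →
        ∀ a ∈ BGAcomp k Sg n p, ∀ b ∈ BGAcomp k Sg n q,
        ∀ (hab : a * b ∈ BGAcomp k Sg n n) (hba : b * a ∈ BGAcomp k Sg n n),
          tr ⟨a * b, hab⟩ = (-1 : k) ^ (p * q) * tr ⟨b * a, hba⟩) ∧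
      (∀ (p : ℕ) (a : BGA k Sg n), a ∈ BGAcomp k Sg n p → a ≠ 0 →
        ∃ (q : ℕ) (b : BGA k Sg n), b ∈ BGAcomp k Sg n q ∧
          ∃ hab : a * b ∈ BGAcomp k Sg n n, tr ⟨a * b, hab⟩ ≠ 0) := by
  rintro ⟨tr, hsym, hnondeg⟩
  obtain ⟨v, hv⟩ := hodd
  obtain ⟨i, rfl⟩ : ∃ i, Sg.vtx i = v := by
    by_contra! h
    have : Sg.deg v = 0 := Finset.sum_eq_zero fun i hi => absurd (Sg.mem_halfedgesAt.mp hi) (h i)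
    simp [this] at hv
  have htr := trace_cycTop_eq_zero hchar hn heven hcompat hsym hv
  obtain ⟨q, b, -, hb, hne⟩ :=
    hnondeg n _ (cycTop k hcompat i).2 (mk_cyc_ne_zero hn hcompat i)
  obtain ⟨μ, hμ⟩ := Submodule.mem_span_singleton.mp (mk_cyc_mul_mem_span hn hcompat i b)
  apply hne
  calc tr ⟨_, hb⟩ = tr (μ • cycTop k hcompat i) := congrArg tr (Subtype.ext hμ.symm)
    _ = 0 := by rw [map_smul, htr, smul_zero]
end

section
/- Let H be an abelian category which is a length category and let S be a simple object of H. Then the pair (⊥S, ⟨S⟩) is a torsion pair in H, where ⊥S = {N ∈ H : Hom(N,S) = 0}: that is, Hom(N,T) = 0 for every N ∈ ⊥S and every T ∈ ⟨S⟩, and every object M of H fits into a short exact sequence 0 → N → M → T → 0 with N ∈ ⊥S and T ∈ ⟨S⟩. -/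
/-!
STATEMENT 6: Let H be an abelian category which is a length category and let S be a simple
object of H. Then the pair (⊥S, ⟨S⟩) is a torsion pair in H, where ⊥S = {N : Hom(N,S) = 0}:
Hom(N,T) = 0 for every N ∈ ⊥S and T ∈ ⟨S⟩, and every object M fits into a short exact
sequence 0 → N → M → T → 0 with N ∈ ⊥S and T ∈ ⟨S⟩.
-/

open CategoryTheory CategoryTheory.Limits

universe v u

variable {C : Type u} [Category.{v} C] [Abelian C]

/-!
Induct on a composition series `X ⊆ M` with `M/X` simple. If `N ⊆ X` is the torsion part of `X`,
then `M/N` is an extension of `X/N ∈ ⟨S⟩` by `M/X`, and it suffices to decompose `M/N`, since a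
decomposition lifts along a quotient by an object of `⊥S`. If `M/X ≅ S`, then `M/N ∈ ⟨S⟩`;
otherwise `M/X ∈ ⊥S`, and an extension of an object of `⊥S` by `T ∈ ⟨S⟩` is decomposed by
induction on `T`. For `T ≅ S`, either the extension lies in `⊥S` or a nonzero map to `S`
restricts to an isomorphism on `T`, which then splits off.
-/

namespace CategoryTheory

namespace ShortComplex

lemma Splitting.shortExact_s_r {E : ShortComplex C} (s : E.Splitting) :
    (ShortComplex.mk s.s s.r s.s_r).ShortExact :=
  Splitting.shortExact
    { r := E.g, s := E.f, f_r := s.s_g, s_g := s.f_r, id := by rw [add_comm]; exact s.id }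

end ShortComplex

lemma shortExact_cokernel_map_comp {X Y Z : C} (f : X ⟶ Y) (g : Y ⟶ Z) [Mono g] :
    (ShortComplex.mk (cokernel.map f (f ≫ g) (𝟙 _) g (by simp))
      (cokernel.map (f ≫ g) g f (𝟙 _) (by simp)) (by ext; simp)).ShortExact := by
  have h := kernelCokernelCompSequence_exact f g
  have : Mono (cokernel.map f (f ≫ g) (𝟙 _) g (by simp)) :=
    (h.exact 2).mono_g (IsZero.eq_of_src (isZero_kernel_of_mono g) _ _)
  have : Epi (cokernel.map (f ≫ g) g f (𝟙 _) (by simp)) :=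
    inferInstanceAs (Epi ((kernelCokernelCompSequence f g).map' 4 5))
  exact .mk' (h.exact 3) inferInstance inferInstance

lemma shortExact_kernel_map_comp {X Y Z : C} (f : X ⟶ Y) (g : Y ⟶ Z) [Epi f] :
    (ShortComplex.mk (kernel.map f (f ≫ g) (𝟙 _) g (by simp))
      (kernel.map (f ≫ g) g f (𝟙 _) (by simp)) (by ext; simp)).ShortExact := by
  have h := kernelCokernelCompSequence_exact f g
  have : Mono (kernel.map f (f ≫ g) (𝟙 _) g (by simp)) :=
    inferInstanceAs (Mono ((kernelCokernelCompSequence f g).map' 0 1))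
  have : Epi (kernel.map (f ≫ g) g f (𝟙 _) (by simp)) :=
    (h.exact 1).epi_f (IsZero.eq_of_tgt (isZero_cokernel_of_epi f) _ _)
  exact .mk' (h.exact 0) inferInstance inferInstance

-- Third isomorphism theorem: for `A ⊆ B ⊆ M`, the sequence `B/A ↪ M/A ↠ M/B` is exact.
lemma exists_shortExact_comp_of_mono {A B B' M M' : C} {f : A ⟶ B} {p : B ⟶ B'}
    {wf : f ≫ p = 0} (hf : (ShortComplex.mk f p wf).ShortExact) {g : B ⟶ M} {q : M ⟶ M'}
    {wg : g ≫ q = 0} (hg : (ShortComplex.mk g q wg).ShortExact) :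
    ∃ (W : C) (r : M ⟶ W) (wr : (f ≫ g) ≫ r = 0) (j : B' ⟶ W) (z : W ⟶ M') (wj : j ≫ z = 0),
      (ShortComplex.mk (f ≫ g) r wr).ShortExact ∧ (ShortComplex.mk j z wj).ShortExact := by
  have := hf.mono_f
  have := hg.mono_f
  let e₁ : cokernel f ≅ B' := (colimit.isColimit _).coconePointUniqueUpToIso hf.gIsCokernel
  let e₃ : cokernel g ≅ M' := (colimit.isColimit _).coconePointUniqueUpToIso hg.gIsCokernel
  refine ⟨cokernel (f ≫ g), cokernel.π _, cokernel.condition _,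
    e₁.inv ≫ cokernel.map f (f ≫ g) (𝟙 _) g (by simp),
    cokernel.map (f ≫ g) g f (𝟙 _) (by simp) ≫ e₃.hom, by simp [e₁, ← cancel_epi (cokernel.π f)],
    .mk' (ShortComplex.exact_cokernel _) inferInstance inferInstance, ?_⟩
  refine ShortComplex.shortExact_of_iso ?_ (shortExact_cokernel_map_comp f g)
  exact ShortComplex.isoMk e₁ (Iso.refl _) e₃ (by simp) (by simp)

-- Dually, for `M ↠ W ↠ T₁`, the sequence `ker (M → W) ↪ ker (M → T₁) ↠ ker (W → T₁)` is exact.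
lemma exists_shortExact_comp_of_epi {N M W N₁ T₁ : C} {a : N ⟶ M} {π : M ⟶ W}
    {wa : a ≫ π = 0} (ha : (ShortComplex.mk a π wa).ShortExact) {n : N₁ ⟶ W} {p : W ⟶ T₁}
    {wn : n ≫ p = 0} (hn : (ShortComplex.mk n p wn).ShortExact) :
    ∃ (K : C) (k : K ⟶ M) (wk : k ≫ π ≫ p = 0) (u : N ⟶ K) (r : K ⟶ N₁) (wu : u ≫ r = 0),
      (ShortComplex.mk k (π ≫ p) wk).ShortExact ∧ (ShortComplex.mk u r wu).ShortExact := by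
  have := ha.epi_g
  have := hn.epi_g
  let e₁ : N ≅ kernel π := ha.fIsKernel.conePointUniqueUpToIso (limit.isLimit _)
  let e₃ : N₁ ≅ kernel p := hn.fIsKernel.conePointUniqueUpToIso (limit.isLimit _)
  refine ⟨kernel (π ≫ p), kernel.ι _, kernel.condition _,
    e₁.hom ≫ kernel.map π (π ≫ p) (𝟙 _) p (by simp),
    kernel.map (π ≫ p) p π (𝟙 _) (by simp) ≫ e₃.inv, by rw [← cancel_mono e₃.hom]; ext; simp,
    .mk' (ShortComplex.exact_kernel _) inferInstance inferInstance, ?_⟩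
  refine ShortComplex.shortExact_of_iso ?_ (shortExact_kernel_map_comp π p)
  exact ShortComplex.isoMk e₁.symm (Iso.refl _) e₃.symm (by simp) (by simp)

end CategoryTheory

def leftOrthogonal (S : C) : ObjectProperty C := fun X => ∀ φ : X ⟶ S, φ = 0

instance (S : C) : (leftOrthogonal S).IsClosedUnderExtensions where
  prop_X₂_of_shortExact {E} hE h₁ h₃ φ := by
    have := hE.epi_g
    rw [← hE.exact.g_desc φ (h₁ _), h₃ (hE.exact.desc φ (h₁ _)), comp_zero]

lemma leftOrthogonal_or_nonempty_iso_of_simple (S Z : C) [Simple S] [Simple Z] :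
    leftOrthogonal S Z ∨ Nonempty (Z ≅ S) := by
  refine or_iff_not_imp_left.2 fun hZ => ?_
  obtain ⟨φ, hφ⟩ := not_forall.1 hZ
  have := isIso_of_hom_simple hφ
  exact ⟨asIso φ⟩

lemma SClosure.eq_zero_of_leftOrthogonal {S T N : C} (hT : SClosure S T)
    (hN : leftOrthogonal S N) (ψ : N ⟶ T) : ψ = 0 := by
  induction hT with
  | of_isZero T hT => exact hT.eq_of_tgt _ _
  | of_iso T e =>
    obtain ⟨e⟩ := e
    rw [← cancel_mono e.hom, hN (ψ ≫ e.hom), zero_comp]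
  | of_extension f g w hE _ _ ih₁ ih₃ =>
    have := hE.mono_f
    rw [← hE.exact.lift_f ψ (ih₃ _), ih₁ (hE.exact.lift ψ _), zero_comp]

def HasTorsionDecomposition (S M : C) : Prop :=
  ∃ (N T : C) (f : N ⟶ M) (g : M ⟶ T) (w : f ≫ g = 0),
    (ShortComplex.mk f g w).ShortExact ∧ leftOrthogonal S N ∧ SClosure S T

namespace HasTorsionDecomposition

open ZeroObject

variable {S : C}

lemma of_leftOrthogonal {M : C} (hM : leftOrthogonal S M) : HasTorsionDecomposition S M :=
  ⟨M, 0, 𝟙 M, 0, by simp,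
    (ShortComplex.Splitting.ofIsIsoOfIsZero _ (by dsimp; infer_instance) (isZero_zero C)).shortExact,
    hM, .of_isZero _ (isZero_zero C)⟩

lemma of_sClosure {M : C} (hM : SClosure S M) : HasTorsionDecomposition S M :=
  ⟨0, M, 0, 𝟙 M, by simp,
    (ShortComplex.Splitting.ofIsZeroOfIsIso _ (isZero_zero C) (by dsimp; infer_instance)).shortExact,
    fun _ => (isZero_zero C).eq_of_src _ _, hM⟩

lemma of_shortExact_of_sClosure {K M T : C} {k : K ⟶ M} {q : M ⟶ T} {w : k ≫ q = 0}
    (hE : (ShortComplex.mk k q w).ShortExact) (hK : HasTorsionDecomposition S K)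
    (hT : SClosure S T) : HasTorsionDecomposition S M := by
  obtain ⟨N, T₂, n, p, wn, hn, hN, hT₂⟩ := hK
  obtain ⟨W, r, wr, j, z, wj, hr, hjz⟩ := exists_shortExact_comp_of_mono hn hE
  exact ⟨N, W, n ≫ k, r, wr, hr, hN, .of_extension j z wj hjz hT₂ hT⟩

lemma of_shortExact_of_leftOrthogonal {N M W : C} {a : N ⟶ M} {π : M ⟶ W} {w : a ≫ π = 0}
    (hE : (ShortComplex.mk a π w).ShortExact) (hN : leftOrthogonal S N)
    (hW : HasTorsionDecomposition S W) : HasTorsionDecomposition S M := by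
  obtain ⟨N₁, T₁, n, p, wn, hn, hN₁, hT₁⟩ := hW
  obtain ⟨K, k, wk, _, _, _, hk, hur⟩ := exists_shortExact_comp_of_epi hE hn
  exact ⟨K, T₁, k, π ≫ p, wk, hk, (leftOrthogonal S).prop_X₂_of_shortExact hur hN hN₁, hT₁⟩

lemma of_shortExact_of_iso_of_leftOrthogonal [Simple S] {T M Z : C} {i : T ⟶ M} {q : M ⟶ Z}
    {w : i ≫ q = 0} (hE : (ShortComplex.mk i q w).ShortExact) (e : T ≅ S)
    (hZ : leftOrthogonal S Z) : HasTorsionDecomposition S M := by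
  by_cases hM : leftOrthogonal S M
  · exact of_leftOrthogonal hM
  obtain ⟨φ, hφ⟩ := not_forall.1 hM
  have := hE.epi_g
  have hiφ : i ≫ φ ≠ 0 := fun h =>
    hφ (by rw [← hE.exact.g_desc φ h, hZ (hE.exact.desc φ h), comp_zero])
  have : Simple T := Simple.of_iso e
  have := isIso_of_hom_simple hiφ
  let s := ShortComplex.Splitting.ofExactOfRetraction _ hE.exact (φ ≫ inv (i ≫ φ))
    (by rw [← Category.assoc, IsIso.hom_inv_id]) hE.epi_g
  exact ⟨Z, T, s.s, s.r, s.s_r, s.shortExact_s_r, hZ, .of_iso T ⟨e⟩⟩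

lemma of_shortExact_of_sClosure_of_leftOrthogonal [Simple S] {T M Z : C} {i : T ⟶ M}
    {q : M ⟶ Z} {w : i ≫ q = 0} (hE : (ShortComplex.mk i q w).ShortExact)
    (hT : SClosure S T) (hZ : leftOrthogonal S Z) : HasTorsionDecomposition S M := by
  induction hT generalizing M Z with
  | of_isZero T hT =>
    exact of_leftOrthogonal
      ((leftOrthogonal S).prop_X₂_of_shortExact hE (fun _ => hT.eq_of_src _ _) hZ)
  | of_iso T e =>
    obtain ⟨e⟩ := e
    exact of_shortExact_of_iso_of_leftOrthogonal hE e hZ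
  | of_extension f g w hT _ _ ih₁ ih₃ =>
    obtain ⟨_, _, _, _, _, _, hr, hjz⟩ := exists_shortExact_comp_of_mono hT hE
    obtain ⟨_, _, _, _, _, hn, hN₁, hT₁⟩ := ih₃ hjz hZ
    obtain ⟨_, _, _, _, _, _, hk, huv⟩ := exists_shortExact_comp_of_epi hr hn
    exact of_shortExact_of_sClosure hk (ih₁ huv hN₁) hT₁

end HasTorsionDecomposition

lemma hasTorsionDecomposition_of_finLength (S : C) [Simple S] {M : C} (hM : FinLength M) :
    HasTorsionDecomposition S M := by
  induction hM with
  | of_isZero M hM => exact .of_leftOrthogonal fun _ => hM.eq_of_src _ _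
  | @of_extension _ _ Z _ _ _ hE _ hZ ih =>
    obtain ⟨_, _, _, _, _, hn, hN, hT⟩ := ih
    obtain ⟨_, _, _, j, z, wj, hr, hjz⟩ := exists_shortExact_comp_of_mono hn hE
    refine .of_shortExact_of_leftOrthogonal hr hN ?_
    rcases leftOrthogonal_or_nonempty_iso_of_simple S Z with hZS | hZS
    · exact .of_shortExact_of_sClosure_of_leftOrthogonal hjz hT hZS
    · exact .of_sClosure (.of_extension j z wj hjz hT (.of_iso _ hZS))

theorem statement6 (hlen : ∀ X : C, FinLength X) (S : C) [Simple S] :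
    (∀ N T : C, (∀ φ : N ⟶ S, φ = 0) → SClosure S T → ∀ ψ : N ⟶ T, ψ = 0) ∧
    (∀ M : C, ∃ (N T : C) (f : N ⟶ M) (g : M ⟶ T) (w : f ≫ g = 0),
      (ShortComplex.mk f g w).ShortExact ∧ (∀ φ : N ⟶ S, φ = 0) ∧ SClosure S T) :=
  ⟨fun _ _ hN hT ψ => hT.eq_zero_of_leftOrthogonal hN ψ,
    fun M => hasTorsionDecomposition_of_finLength S (hlen M)⟩
end

section
/- Let H be an abelian category which is a length category and let S be a simple object of H. Then the pair (⟨S⟩, S⊥) is a torsion pair in H, where S⊥ = {N ∈ H : Hom(S,N) = 0}: that is, Hom(T,N) = 0 for every T ∈ ⟨S⟩ and every N ∈ S⊥, and every object M of H fits into a short exact sequence 0 → T → M → N → 0 with T ∈ ⟨S⟩ and N ∈ S⊥. -/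
/-!
Induct along a composition series. If `X ⊆ M` has simple quotient `Z` and `X` has a torsion
part `T_X ∈ ⟨S⟩` with quotient `N_X ∈ S⊥`, push the extension `0 → X → M → Z → 0` out along
`X → N_X`: the pushout `P` is an extension of `Z` by `N_X`, and `M → P` is an epimorphism with
kernel `≅ T_X`. Either `Hom(S, P) = 0`, or a nonzero `S → P` cannot factor through `N_X`, so it
maps isomorphically onto `Z`; then `0 → N_X → P → Z → 0` splits and the retraction `P → N_X`
has kernel `≅ S`. Composing with `M → P` gives an epimorphism from `M` onto an object of `S⊥`
whose kernel is an extension of objects of `⟨S⟩`.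
-/

open CategoryTheory CategoryTheory.Limits

universe v u

variable {C : Type u} [Category.{v} C] [Abelian C]

def TorsionFree (S N : C) : Prop := ∀ φ : S ⟶ N, φ = 0

def HasTorsionFreeQuotient (S M : C) : Prop :=
  ∃ (N : C) (g : M ⟶ N), Epi g ∧ SClosure S (kernel g) ∧ TorsionFree S N

lemma CategoryTheory.ShortComplex.Splitting.shortExact_s_r_s7 {S : ShortComplex C}
    (sp : S.Splitting) :
    (ShortComplex.mk sp.s sp.r sp.s_r).ShortExact :=
  ShortComplex.Splitting.shortExact
    { r := S.g, s := S.f, f_r := sp.s_g, s_g := sp.f_r, id := (add_comm _ _).trans sp.id }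

lemma shortExact_kernel_map_comp_of_epi {X Y Z : C} (f : X ⟶ Y) (g : Y ⟶ Z) [Epi f] :
    (ShortComplex.mk (kernel.map f (f ≫ g) (𝟙 _) g (by simp))
      (kernel.map (f ≫ g) g f (𝟙 _) (by simp)) (by ext; simp)).ShortExact where
  exact := (kernelCokernelCompSequence_exact f g).exact 0
  mono_f := by dsimp; infer_instance
  epi_g := ((kernelCokernelCompSequence_exact f g).exact 1).epi_f
    ((isZero_cokernel_of_epi f).eq_of_tgt _ _)

namespace SClosure

variable {S : C}

instance : ObjectProperty.IsClosedUnderIsomorphisms (SClosure S) where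
  of_iso e hX :=
    of_extension e.hom _ (cokernel.condition e.hom) { exact := ShortComplex.exact_cokernel _ }
      hX (of_isZero _ (isZero_cokernel_of_epi _))

lemma hom_eq_zero {T N : C} (hT : SClosure S T) (hN : TorsionFree S N) (ψ : T ⟶ N) :
    ψ = 0 := by
  induction hT with
  | of_isZero X hX => exact hX.eq_of_src ψ 0
  | of_iso X hX =>
    obtain ⟨e⟩ := hX
    rw [← e.hom_inv_id_assoc ψ, hN (e.inv ≫ ψ), comp_zero]
  | of_extension f g w hse _ _ ihX ihZ =>
    obtain ⟨d, hd⟩ := CokernelCofork.IsColimit.desc' hse.gIsCokernel ψ (ihX (f ≫ ψ))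
    rw [← hd, ihZ d, comp_zero]

lemma kernel_comp {X Y Z : C} (f : X ⟶ Y) (g : Y ⟶ Z) [Epi f] (hf : SClosure S (kernel f))
    (hg : SClosure S (kernel g)) : SClosure S (kernel (f ≫ g)) :=
  of_extension _ _ _ (shortExact_kernel_map_comp_of_epi f g) hf hg

end SClosure

lemma TorsionFree.hasTorsionFreeQuotient {S M : C} (hM : TorsionFree S M) :
    HasTorsionFreeQuotient S M :=
  ⟨M, 𝟙 M, inferInstance, SClosure.of_isZero _ (isZero_kernel_of_mono _), hM⟩

lemma HasTorsionFreeQuotient.of_epi {S M M' : C} (f : M ⟶ M') [Epi f]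
    (hf : SClosure S (kernel f)) (h : HasTorsionFreeQuotient S M') :
    HasTorsionFreeQuotient S M := by
  obtain ⟨N, g, _, hg, hN⟩ := h
  exact ⟨N, f ≫ g, epi_comp f g, hf.kernel_comp f g hg, hN⟩

lemma HasTorsionFreeQuotient.of_mono_of_simple_cokernel (S : C) [Simple S] {N P : C}
    (r : N ⟶ P) [Mono r] [Simple (cokernel r)] (hN : TorsionFree S N) :
    HasTorsionFreeQuotient S P := by
  by_cases hP : TorsionFree S P
  · exact hP.hasTorsionFreeQuotient
  obtain ⟨φ, hφ⟩ : ∃ φ : S ⟶ P, φ ≠ 0 := by simpa [TorsionFree] using hP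
  have hr : (ShortComplex.mk _ _ (cokernel.condition r)).ShortExact :=
    { exact := ShortComplex.exact_cokernel r }
  -- a map `S ⟶ P` killed by `cokernel.π r` factors through `N`, hence vanishes
  have hφπ : φ ≫ cokernel.π r ≠ 0 := fun h =>
    hφ (by rw [← hr.exact.lift_f φ h, hN (hr.exact.lift φ h), zero_comp])
  have := isIso_of_hom_simple hφπ
  let sp := ShortComplex.Splitting.ofExactOfSection _ hr.exact
    (inv (φ ≫ cokernel.π r) ≫ φ) (by simp) hr.mono_f
  have hsp := sp.shortExact_s_r_s7
  refine ⟨N, sp.r, hsp.epi_g, ?_, hN⟩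
  exact ObjectProperty.prop_of_iso (SClosure S)
    ((kernelIsKernel _).conePointUniqueUpToIso hsp.fIsKernel).symm
    (SClosure.of_iso _ ⟨(asIso (φ ≫ cokernel.π r)).symm⟩)

lemma HasTorsionFreeQuotient.of_shortExact (S : C) [Simple S] {X M Z : C} {i : X ⟶ M}
    {p : M ⟶ Z} {w : i ≫ p = 0} (hse : (ShortComplex.mk i p w).ShortExact) [Simple Z]
    (hX : HasTorsionFreeQuotient S X) : HasTorsionFreeQuotient S M := by
  obtain ⟨N, g, _, hg, hN⟩ := hX
  have := hse.mono_f
  have sq := IsPushout.of_hasPushout g i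
  have := Abelian.epi_kernel_map_of_isPushout sq
  have : IsIso (kernel.map _ _ _ _ sq.w) := isIso_of_mono_of_epi _
  have : IsIso (cokernel.map _ _ _ _ sq.flip.w) := isIso_cokernel_map_of_isPushout sq.flip
  have : Simple (cokernel (pushout.inl g i)) := Simple.of_iso (Y := Z)
    ((asIso (cokernel.map _ _ _ _ sq.flip.w)).symm ≪≫
      (cokernelIsCokernel i).coconePointUniqueUpToIso hse.gIsCokernel)
  exact .of_epi (pushout.inr g i)
    (ObjectProperty.prop_of_iso (SClosure S) (asIso (kernel.map _ _ _ _ sq.w)) hg)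
    (.of_mono_of_simple_cokernel S (pushout.inl g i) hN)

lemma FinLength.hasTorsionFreeQuotient (S : C) [Simple S] {M : C} (hM : FinLength M) :
    HasTorsionFreeQuotient S M := by
  induction hM with
  | of_isZero X hX => exact TorsionFree.hasTorsionFreeQuotient fun φ => hX.eq_of_tgt φ 0
  | of_extension i p w hse _ hZ ih =>
    have := hZ
    exact ih.of_shortExact S hse

theorem statement7 (hlen : ∀ X : C, FinLength X) (S : C) [Simple S] :
    (∀ T N : C, SClosure S T → (∀ φ : S ⟶ N, φ = 0) → ∀ ψ : T ⟶ N, ψ = 0) ∧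
    (∀ M : C, ∃ (T N : C) (f : T ⟶ M) (g : M ⟶ N) (w : f ≫ g = 0),
      (ShortComplex.mk f g w).ShortExact ∧ SClosure S T ∧ (∀ φ : S ⟶ N, φ = 0)) := by
  refine ⟨fun T N hT hN => hT.hom_eq_zero hN, fun M => ?_⟩
  obtain ⟨N, g, _, hT, hN⟩ := (hlen M).hasTorsionFreeQuotient S
  exact ⟨kernel g, N, kernel.ι g, g, kernel.condition g,
    { exact := ShortComplex.exact_kernel g }, hT, hN⟩
end
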